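/- (Local geodesics are geodesics in CAT(0)) Let U be a proper geodesic space in which all triangles are thin. Then every local geodesic γ : [0, ℓ] → U is a (global) geodesic, i.e., dist(γ(s), γ(t)) = |s − t| for all s, t. -/

import Mathlib

open Set

/-- `γ` is a unit-speed geodesic from `a` to `b`. -/
def IsGeodesic {X : Type*} [MetricSpace X] (γ : ℝ → X) (a b : X) : Prop :=
  γ 0 = a ∧ γ (dist a b) = b ∧
    ∀ s ∈ Icc (0:ℝ) (dist a b), ∀ t ∈ Icc (0:ℝ) (dist a b),
      dist (γ s) (γ t) = |s - t|

/-- The point of the segment `[a,b]` in the Euclidean plane at arclength `s` from `a`. -/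
noncomputable def cmpPt (a b : EuclideanSpace ℝ (Fin 2)) (s : ℝ) :
    EuclideanSpace ℝ (Fin 2) :=
  AffineMap.lineMap a b (s / dist a b)

/-- A triangle with vertices `x y z` and unit-speed geodesic sides `f : x→y`, `g : x→z`,
`h : y→z` is thin: the natural map from a Euclidean comparison triangle (matching vertices
and side lengths, each comparison side mapped isometrically to the corresponding side)
is distance non-increasing. -/
def IsThin {X : Type*} [MetricSpace X] (x y z : X) (f g h : ℝ → X) : Prop :=
  ∃ x' y' z' : EuclideanSpace ℝ (Fin 2),
    dist x' y' = dist x y ∧ dist x' z' = dist x z ∧ dist y' z' = dist y z ∧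
    (∀ s ∈ Icc (0:ℝ) (dist x y), ∀ t ∈ Icc (0:ℝ) (dist x z),
      dist (f s) (g t) ≤ dist (cmpPt x' y' s) (cmpPt x' z' t)) ∧
    (∀ s ∈ Icc (0:ℝ) (dist x y), ∀ t ∈ Icc (0:ℝ) (dist y z),
      dist (f s) (h t) ≤ dist (cmpPt x' y' s) (cmpPt y' z' t)) ∧
    (∀ s ∈ Icc (0:ℝ) (dist x z), ∀ t ∈ Icc (0:ℝ) (dist y z),
      dist (g s) (h t) ≤ dist (cmpPt x' z' s) (cmpPt y' z' t))

/-- Comparison-triangle estimate in the Euclidean plane: if two points at distance `δ` from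
the corner `y'` on the two sides are at distance at least `2δ`, the triangle is degenerate. -/
lemma euclid_key (x' y' z' : EuclideanSpace ℝ (Fin 2)) (a b δ : ℝ)
    (ha : 0 < a) (hb : 0 < b) (hδ : 0 < δ)
    (hxy : dist x' y' = a) (hyz : dist y' z' = b)
    (hge : 2 * δ ≤ dist (cmpPt x' y' (a - δ)) (cmpPt y' z' δ)) :
    a + b ≤ dist x' z' := by
  have hv : ‖x' - y'‖ = a := by rw [← dist_eq_norm, hxy]
  have hw : ‖z' - y'‖ = b := by rw [← dist_eq_norm, dist_comm, hyz]
  have hpq : cmpPt x' y' (a - δ) - cmpPt y' z' δ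
      = (δ/a) • (x' - y') - (δ/b) • (z' - y') := by
    simp only [cmpPt, hxy, hyz, AffineMap.lineMap_apply, vsub_eq_sub, vadd_eq_add]
    have h1 : (a - δ)/a = 1 - δ/a := by field_simp
    rw [h1]
    module
  rw [dist_eq_norm, hpq] at hge
  have hI : (inner ℝ (x' - y') (z' - y') : ℝ) ≤ -(a*b) := by
    have hsq : (2*δ)^2 ≤ ‖(δ/a) • (x' - y') - (δ/b) • (z' - y')‖^2 := by
      apply pow_le_pow_left₀ (by linarith) hge
    rw [norm_sub_sq_real, norm_smul, norm_smul, real_inner_smul_left,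
      real_inner_smul_right, hv, hw, Real.norm_eq_abs, Real.norm_eq_abs,
      abs_of_nonneg (by positivity), abs_of_nonneg (by positivity)] at hsq
    have h1 : δ/a * a = δ := div_mul_cancel₀ _ ha.ne'
    have h2 : δ/b * b = δ := div_mul_cancel₀ _ hb.ne'
    have h3 : (0:ℝ) < δ/a := by positivity
    have h4 : (0:ℝ) < δ/b := by positivity
    nlinarith [mul_pos h3 h4, mul_pos ha hb]
  have h3 : ‖x' - z'‖^2 = a^2 - 2*(inner ℝ (x' - y') (z' - y') : ℝ) + b^2 := by
    have : x' - z' = (x' - y') - (z' - y') := by abel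
    rw [this, norm_sub_sq_real, hv, hw]
  have h4 : dist x' z' = ‖x' - z'‖ := dist_eq_norm _ _
  nlinarith [dist_nonneg (x := x') (y := z'), sq_nonneg (dist x' z' - (a+b))]

/-- In a proper geodesic space with all triangles thin, every local geodesic
`γ : [0, ℓ] → U` is a global geodesic. -/
theorem stmt_15 {U : Type*} [MetricSpace U] [ProperSpace U]
    (hgeo : ∀ a b : U, ∃ γ : ℝ → U, IsGeodesic γ a b)
    (hthin : ∀ (x y z : U) (f g h : ℝ → U),
      IsGeodesic f x y → IsGeodesic g x z → IsGeodesic h y z → IsThin x y z f g h)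
    (γ : ℝ → U) (ℓ : ℝ) (hℓ : 0 ≤ ℓ)
    (hloc : ∀ t ∈ Icc (0:ℝ) ℓ, ∃ ε > (0:ℝ),
      ∀ s₁ ∈ Icc (0:ℝ) ℓ, ∀ s₂ ∈ Icc (0:ℝ) ℓ,
        |s₁ - t| ≤ ε → |s₂ - t| ≤ ε → dist (γ s₁) (γ s₂) = |s₁ - s₂|) :
    ∀ s ∈ Icc (0:ℝ) ℓ, ∀ t ∈ Icc (0:ℝ) ℓ, dist (γ s) (γ t) = |s - t| := by
  set A : Set ℝ := {t | t ∈ Icc (0:ℝ) ℓ ∧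
    ∀ s₁ ∈ Icc (0:ℝ) t, ∀ s₂ ∈ Icc (0:ℝ) t, dist (γ s₁) (γ s₂) = |s₁ - s₂|} with hA
  have h0A : (0:ℝ) ∈ A := by
    refine ⟨⟨le_refl 0, hℓ⟩, ?_⟩
    intro s₁ hs₁ s₂ hs₂
    have e1 : s₁ = 0 := le_antisymm hs₁.2 hs₁.1
    have e2 : s₂ = 0 := le_antisymm hs₂.2 hs₂.1
    rw [e1, e2]; simp
  have hbdd : BddAbove A := ⟨ℓ, fun t ht => ht.1.2⟩
  set T := sSup A with hT
  have hT0 : 0 ≤ T := le_csSup hbdd h0A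
  have hTℓ : T ≤ ℓ := csSup_le ⟨0, h0A⟩ (fun t ht => ht.1.2)
  have hTmem : T ∈ Icc (0:ℝ) ℓ := ⟨hT0, hTℓ⟩
  -- T belongs to A
  have hTA : T ∈ A := by
    refine ⟨hTmem, ?_⟩
    have key : ∀ s₁, 0 ≤ s₁ → s₁ ≤ T → dist (γ s₁) (γ T) = T - s₁ := by
      intro s₁ hs₁0 hs₁T
      rcases eq_or_lt_of_le hs₁T with rfl | hlt
      · rw [dist_self]; ring
      obtain ⟨ε, hε, hlocT⟩ := hloc T hTmem
      have hnear : ∀ t, max s₁ (T - ε) < t → t < T →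
          dist (γ s₁) (γ t) = t - s₁ ∧ dist (γ t) (γ T) = T - t := by
        intro t h1 h2
        have hs₁t : s₁ < t := lt_of_le_of_lt (le_max_left _ _) h1
        have hTεt : T - ε < t := lt_of_le_of_lt (le_max_right _ _) h1
        obtain ⟨t', ht'A, htt'⟩ := exists_lt_of_lt_csSup ⟨0, h0A⟩ h2
        constructor
        · have e1 := ht'A.2 s₁ ⟨hs₁0, by linarith⟩ t ⟨by linarith, le_of_lt htt'⟩
          rw [e1, abs_sub_comm, abs_of_nonneg (by linarith)]
        · have e2 := hlocT t ⟨by linarith, by linarith⟩ T hTmem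
            (abs_le.mpr ⟨by linarith, by linarith⟩) (by simp; linarith)
          rw [e2, abs_sub_comm, abs_of_nonneg (by linarith)]
      have ht₀ : max s₁ (T - ε) < T := max_lt hlt (by linarith)
      have hub : dist (γ s₁) (γ T) ≤ T - s₁ := by
        obtain ⟨e1, e2⟩ := hnear ((max s₁ (T - ε) + T)/2) (by linarith) (by linarith)
        calc dist (γ s₁) (γ T) ≤ dist (γ s₁) (γ ((max s₁ (T - ε) + T)/2))
              + dist (γ ((max s₁ (T - ε) + T)/2)) (γ T) := dist_triangle _ _ _
          _ = T - s₁ := by rw [e1, e2]; ring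
      have hlb : T - s₁ ≤ dist (γ s₁) (γ T) := by
        refine le_of_forall_pos_le_add ?_
        intro η hη
        set t := max ((max s₁ (T - ε) + T)/2) (T - η/2) with ht_def
        have h1 : max s₁ (T - ε) < t :=
          lt_of_lt_of_le (by linarith) (le_max_left _ _)
        have h2 : t < T := max_lt (by linarith) (by linarith)
        have h5 : T - η/2 ≤ t := le_max_right _ _
        obtain ⟨e1, e2⟩ := hnear t h1 h2
        have htr := dist_triangle (γ s₁) (γ T) (γ t)
        rw [dist_comm (γ T) (γ t), e1, e2] at htr
        linarith
      linarith
    intro s₁ hs₁ s₂ hs₂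
    have main : ∀ a b : ℝ, 0 ≤ a → a ≤ b → b ≤ T → dist (γ a) (γ b) = |a - b| := by
      intro a b h0 hab hbT
      rcases eq_or_lt_of_le hbT with rfl | hlt2
      · rw [key a h0 hab, abs_sub_comm, abs_of_nonneg (by linarith)]
      · obtain ⟨t', ht'A, hbt'⟩ := exists_lt_of_lt_csSup ⟨0, h0A⟩ hlt2
        exact ht'A.2 a ⟨h0, by linarith⟩ b ⟨by linarith, le_of_lt hbt'⟩
    rcases le_total s₁ s₂ with h | h
    · exact main s₁ s₂ hs₁.1 h hs₂.2
    · rw [dist_comm, abs_sub_comm]; exact main s₂ s₁ hs₂.1 h hs₁.2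
  -- T = ℓ by openness
  have hTl : T = ℓ := by
    by_contra hne
    have hTlt : T < ℓ := lt_of_le_of_ne hTℓ hne
    obtain ⟨ε, hε, hlocT⟩ := hloc T hTmem
    have huT : T < min ℓ (T + ε) := lt_min hTlt (by linarith)
    have huℓ : min ℓ (T + ε) ≤ ℓ := min_le_left _ _
    have huTε : min ℓ (T + ε) ≤ T + ε := min_le_right _ _
    have hmain : ∀ s₁ s₂, 0 ≤ s₁ → s₁ ≤ s₂ → s₂ ≤ min ℓ (T + ε) →
        dist (γ s₁) (γ s₂) = |s₁ - s₂| := by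
      intro s₁ s₂ h0 h12 h2u
      rcases le_or_gt s₂ T with hcase | hcase
      · exact hTA.2 s₁ ⟨h0, by linarith⟩ s₂ ⟨by linarith, hcase⟩
      rcases le_or_gt (T - ε) s₁ with hcase2 | hcase2
      · -- local case
        exact hlocT s₁ ⟨h0, by linarith⟩ s₂ ⟨by linarith, by linarith⟩
          (abs_le.mpr ⟨by linarith, by linarith⟩)
          (abs_le.mpr ⟨by linarith, by linarith⟩)
      · -- triangle case
        have ha : (0:ℝ) < T - s₁ := by linarith
        have hb : (0:ℝ) < s₂ - T := by linarith
        have hεa : ε < T - s₁ := by linarith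
        have hs₂ℓ : s₂ ≤ ℓ := le_trans h2u huℓ
        have hs₂ε : s₂ ≤ T + ε := le_trans h2u huTε
        have hdxy : dist (γ s₁) (γ T) = T - s₁ := by
          have e := hTA.2 s₁ ⟨h0, by linarith⟩ T ⟨hT0, le_refl T⟩
          rw [e, abs_sub_comm, abs_of_nonneg (by linarith)]
        have hdyz : dist (γ T) (γ s₂) = s₂ - T := by
          have e := hlocT T hTmem s₂ ⟨by linarith, hs₂ℓ⟩ (by simp; linarith)
            (abs_le.mpr ⟨by linarith, by linarith⟩)
          rw [e, abs_sub_comm, abs_of_nonneg (by linarith)]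
        have hf : IsGeodesic (fun s => γ (s₁ + s)) (γ s₁) (γ T) := by
          refine ⟨by simp, ?_, ?_⟩
          · show γ (s₁ + dist (γ s₁) (γ T)) = γ T
            rw [hdxy, show s₁ + (T - s₁) = T by ring]
          · intro s hs t ht
            rw [hdxy] at hs ht
            have e := hTA.2 (s₁ + s) ⟨by linarith [hs.1], by linarith [hs.2]⟩
              (s₁ + t) ⟨by linarith [ht.1], by linarith [ht.2]⟩
            rw [show s₁ + s - (s₁ + t) = s - t by ring] at e
            exact e
        have hh : IsGeodesic (fun t => γ (T + t)) (γ T) (γ s₂) := by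
          refine ⟨by simp, ?_, ?_⟩
          · show γ (T + dist (γ T) (γ s₂)) = γ s₂
            rw [hdyz, show T + (s₂ - T) = s₂ by ring]
          · intro s hs t ht
            rw [hdyz] at hs ht
            have e := hlocT (T + s) ⟨by linarith [hs.1], by linarith [hs.2]⟩
              (T + t) ⟨by linarith [ht.1], by linarith [ht.2]⟩
              (abs_le.mpr ⟨by linarith [hs.1], by linarith [hs.2]⟩)
              (abs_le.mpr ⟨by linarith [ht.1], by linarith [ht.2]⟩)
            rw [show T + s - (T + t) = s - t by ring] at e
            exact e
        obtain ⟨g, hg⟩ := hgeo (γ s₁) (γ s₂)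
        obtain ⟨x', y', z', e1, e2, e3, _, hfh, _⟩ :=
          hthin (γ s₁) (γ T) (γ s₂) _ g _ hf hg hh
        rw [hdxy, hdyz] at hfh
        have hδpos : (0:ℝ) < min ε (s₂ - T) := lt_min hε hb
        have hδε : min ε (s₂ - T) ≤ ε := min_le_left _ _
        have hδb : min ε (s₂ - T) ≤ s₂ - T := min_le_right _ _
        have hth := hfh (T - s₁ - min ε (s₂ - T)) ⟨by linarith, by linarith⟩
          (min ε (s₂ - T)) ⟨le_of_lt hδpos, hδb⟩
        have hL : dist (γ (s₁ + (T - s₁ - min ε (s₂ - T)))) (γ (T + min ε (s₂ - T)))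
            = 2 * min ε (s₂ - T) := by
          rw [show s₁ + (T - s₁ - min ε (s₂ - T)) = T - min ε (s₂ - T) by ring]
          have e := hlocT (T - min ε (s₂ - T)) ⟨by linarith, by linarith⟩
            (T + min ε (s₂ - T)) ⟨by linarith, by linarith⟩
            (abs_le.mpr ⟨by linarith, by linarith⟩)
            (abs_le.mpr ⟨by linarith, by linarith⟩)
          rw [e, show T - min ε (s₂ - T) - (T + min ε (s₂ - T))
            = -(2 * min ε (s₂ - T)) by ring, abs_neg, abs_of_nonneg (by linarith)]
        have hth' : 2 * min ε (s₂ - T) ≤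
            dist (cmpPt x' y' (T - s₁ - min ε (s₂ - T))) (cmpPt y' z' (min ε (s₂ - T))) := by
          calc 2 * min ε (s₂ - T)
              = dist (γ (s₁ + (T - s₁ - min ε (s₂ - T)))) (γ (T + min ε (s₂ - T))) := hL.symm
            _ ≤ _ := hth
        have hE : (T - s₁) + (s₂ - T) ≤ dist x' z' := by
          apply euclid_key x' y' z' (T - s₁) (s₂ - T) (min ε (s₂ - T)) ha hb hδpos
            (by rw [e1, hdxy]) (by rw [e3, hdyz])
          convert hth' using 3
        have htri : dist (γ s₁) (γ s₂) ≤ (T - s₁) + (s₂ - T) := by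
          calc dist (γ s₁) (γ s₂) ≤ dist (γ s₁) (γ T) + dist (γ T) (γ s₂) :=
              dist_triangle _ _ _
            _ = (T - s₁) + (s₂ - T) := by rw [hdxy, hdyz]
        rw [e2] at hE
        rw [abs_sub_comm, abs_of_nonneg (by linarith)]
        linarith
    have huA : min ℓ (T + ε) ∈ A := by
      refine ⟨⟨le_min hℓ (by linarith), huℓ⟩, ?_⟩
      intro s₁ hs₁ s₂ hs₂
      rcases le_total s₁ s₂ with h | h
      · exact hmain s₁ s₂ hs₁.1 h hs₂.2
      · rw [dist_comm, abs_sub_comm]; exact hmain s₂ s₁ hs₂.1 h hs₁.2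
    have := le_csSup hbdd huA
    linarith
  intro s hs t ht
  rw [hTl] at hTA
  exact hTA.2 s hs t ht
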